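/- Suppose that n ≥ 4k and k ≥ 3. Then d_2^max(C_n^k) ≤ k + (k+1)k²/n, i.e. every subgraph H of C_n^k with at least 3 vertices satisfies e_H/(v_H − 2) ≤ k + (k+1)k²/n. -/

import Mathlib

namespace RandomGraphs

/-- The `k`-th power of a graph: two vertices are adjacent iff their distance in `G`
is positive (they are distinct and reachable from each other) and at most `k`. -/
def graphPow {V : Type*} (G : SimpleGraph V) (k : ℕ) : SimpleGraph V where
  Adj u v := u ≠ v ∧ G.Reachable u v ∧ G.dist u v ≤ k
  symm := by
    constructor; intro u v h
    exact ⟨h.1.symm, h.2.1.symm, by rw [SimpleGraph.dist_comm]; exact h.2.2⟩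
  loopless := by constructor; intro v h; exact h.1 rfl

end RandomGraphs

open RandomGraphs

/-!
Let `T ⊆ ℤ/n` be the vertex set of `H` and count the *exits* of `T`: pairs `(s, j)` with `s ∈ T`,
`1 ≤ j ≤ k` and `s + j ∉ T`. Every edge of `C_n^k` is `{s, s + j}` with `1 ≤ j ≤ k`, so
`e_H + #exits ≤ k v_H`. When fewer than `2k` points lie outside `T`, the set `T` covers more than
half of the cycle and `e_H ≤ k v_H` is already enough. Otherwise `e_H ≤ k (v_H - 2)`: for
`v_H ≤ k + 1` because `e_H ≤ C(v_H, 2)`, and for larger `v_H` because there are at least `2k` exits.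
Either every point outside `T` has a point of `T` at most `k` steps behind it, or some `p ∈ T` has
its `k` successors outside `T`; in the latter case either every point of `T` exits, or the `k`
points before the end `q` of a long run of `T` exit through `q`. These are new exits unless
`q = p + 1`, and then the three points `p, p - 1, p - 2` alone exit `k + (k - 1) + (k - 2) ≥ 2k`
times.
-/

open Finset SimpleGraph

theorem SimpleGraph.Subgraph.ncard_edgeSet_le_choose_two {V : Type*} [Finite V]
    {G : SimpleGraph V} (H : G.Subgraph) : H.edgeSet.ncard ≤ H.verts.ncard.choose 2 := by
  classical
  obtain ⟨T, hT⟩ : ∃ T : Finset V, ↑T = H.verts := ⟨_, (Set.toFinite _).coe_toFinset⟩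
  have hsub : H.edgeSet ⊆ ↑(T.offDiag.image (Function.uncurry Sym2.mk)) := by
    rintro ⟨u, v⟩ huv
    have huv : H.Adj u v := huv
    simp only [coe_image, coe_offDiag, hT]
    exact ⟨(u, v), ⟨huv.fst_mem, huv.snd_mem, huv.ne⟩, rfl⟩
  rw [← hT, Set.ncard_coe_finset, ← Sym2.card_image_offDiag, ← Set.ncard_coe_finset]
  exact Set.ncard_le_ncard hsub (finite_toSet _)

namespace RandomGraphs

section CyclePower

open scoped Fin.NatCast Fin.CommRing

variable {n k : ℕ} [NeZero n]

theorem exists_eq_add_intCast_of_walk {u v : Fin n} (w : (cycleGraph n).Walk u v) :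
    ∃ z : ℤ, |z| ≤ w.length ∧ v = u + z := by
  induction w with
  | nil => exact ⟨0, by simp, by simp⟩
  | @cons u u' v h w ih =>
    obtain ⟨z, hz, rfl⟩ := ih
    rw [cycleGraph_adj'] at h
    have step : u' = u - 1 ∨ u' = u + 1 := by
      rcases h with h | h
      · left; rw [eq_sub_iff_add_eq, ← eq_sub_iff_add_eq', ← Fin.cast_val_eq_self (u - u'), h]; simp
      · right; rw [← sub_eq_iff_eq_add', ← Fin.cast_val_eq_self (u' - u), h]; simp
    rw [Walk.length_cons, Nat.cast_succ]
    rcases step with rfl | rfl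
    · exact ⟨z - 1, by grind, by push_cast; ring⟩
    · exact ⟨z + 1, by grind, by push_cast; ring⟩

theorem graphPow_cycleGraph_adj {u v : Fin n} (h : (graphPow (cycleGraph n) k).Adj u v) :
    ∃ j ∈ Icc 1 k, v = u + j ∨ u = v + j := by
  obtain ⟨hne, hreach, hdist⟩ := h
  obtain ⟨w, hw⟩ := hreach.exists_walk_length_eq_dist
  obtain ⟨z, hz, rfl⟩ := exists_eq_add_intCast_of_walk w
  obtain ⟨j, rfl | rfl⟩ := Int.eq_nat_or_neg z <;>
    simp only [abs_neg, Nat.abs_cast, Nat.cast_le] at hz <;>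
    refine ⟨j, mem_Icc.2 ⟨Nat.one_le_iff_ne_zero.2 ?_, by omega⟩, by simp⟩ <;>
    rintro rfl <;> simp at hne

theorem natCast_injOn_Iio : Set.InjOn (Nat.cast : ℕ → Fin n) (Set.Iio n) := fun i hi j hj h => by
  simpa [Fin.val_cast_of_lt hi, Fin.val_cast_of_lt hj] using congrArg Fin.val h

theorem exists_forall_add_not_of_forall_sub_not {P : Fin n → Prop} {x : Fin n} (hx : ¬P x)
    (hxk : ∀ j ∈ Icc 1 k, ¬P (x - j)) (hP : ∃ t, P t) :
    ∃ p, P p ∧ ∀ j ∈ Icc 1 k, ¬P (p + j) := by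
  classical
  have hex : ∃ m : ℕ, P (x - m) := by
    obtain ⟨t, ht⟩ := hP
    exact ⟨(x - t).val, by simpa⟩
  set m := Nat.find hex
  have hkm : k < m := by
    by_contra! hmk
    rcases Nat.eq_zero_or_pos m with h0 | h0
    · have hxm : P (x - m) := Nat.find_spec hex
      rw [h0, Nat.cast_zero, sub_zero] at hxm
      exact hx hxm
    · exact hxk m (mem_Icc.2 ⟨h0, hmk⟩) (Nat.find_spec hex)
  refine ⟨x - m, Nat.find_spec hex, fun j hj => ?_⟩
  have hj := mem_Icc.1 hj
  rw [show x - m + j = x - (m - j : ℕ) by rw [Nat.cast_sub (by omega)]; ring]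
  exact Nat.find_min hex (by omega)

def exitSteps (T : Finset (Fin n)) (k : ℕ) (s : Fin n) : Finset ℕ := {j ∈ Icc 1 k | s + j ∉ T}

variable {T : Finset (Fin n)}

theorem card_compl_le_sum_card_exitSteps (h : ∀ x ∉ T, ∃ j ∈ Icc 1 k, x - j ∈ T) :
    #Tᶜ ≤ ∑ s ∈ T, #(exitSteps T k s) := by
  rw [← card_sigma]
  refine card_le_card_of_surjOn (fun p => p.1 + p.2) fun x hx => ?_
  obtain ⟨j, hj, hxj⟩ := h x (by simpa using hx)
  exact ⟨⟨x - j, j⟩, by simpa [exitSteps, mem_Icc.1 hj, hxj] using hx, by simp⟩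

theorem add_card_le_sum_card_exitSteps {p : Fin n} {S : Finset (Fin n)} (hp : p ∈ T)
    (hpk : ∀ j ∈ Icc 1 k, p + j ∉ T) (hS : S ⊆ T.erase p)
    (hSk : ∀ s ∈ S, ∃ j ∈ Icc 1 k, s + j ∉ T) :
    k + #S ≤ ∑ s ∈ T, #(exitSteps T k s) := by
  have hpS : p ∉ S := fun h => by simpa using hS h
  calc k + #S = #(exitSteps T k p) + ∑ _ ∈ S, 1 := by
        rw [exitSteps, filter_true_of_mem hpk, Nat.card_Icc, card_eq_sum_ones, Nat.add_sub_cancel]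
    _ ≤ #(exitSteps T k p) + ∑ s ∈ S, #(exitSteps T k s) := by
        gcongr with s hs
        obtain ⟨j, hj, hsj⟩ := hSk s hs
        exact card_pos.2 ⟨j, mem_filter.2 ⟨hj, hsj⟩⟩
    _ = ∑ s ∈ insert p S, #(exitSteps T k s) := by rw [sum_insert hpS]
    _ ≤ ∑ s ∈ T, #(exitSteps T k s) :=
        sum_le_sum_of_subset (insert_subset hp (hS.trans (erase_subset _ _)))

theorem sum_range_sub_le_sum_card_exitSteps {p : Fin n} {m : ℕ} (hmn : m ≤ n)
    (hpT : ∀ i < m, p - i ∈ T) (hpk : ∀ j ∈ Icc 1 k, p + j ∉ T) :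
    ∑ i ∈ range m, (k - i) ≤ ∑ s ∈ T, #(exitSteps T k s) := by
  have hinj : Set.InjOn (fun i : ℕ => p - i) (range m) := fun i hi j hj h =>
    natCast_injOn_Iio (by simp at hi ⊢; omega) (by simp at hj ⊢; omega) (sub_right_injective h)
  calc ∑ i ∈ range m, (k - i) ≤ ∑ i ∈ range m, #(exitSteps T k (p - i)) := by
        gcongr with i
        calc k - i = #(Icc (i + 1) k) := by simp
          _ ≤ _ := card_le_card fun j hj => by
            have hj := mem_Icc.1 hj
            refine mem_filter.2 ⟨mem_Icc.2 ⟨by omega, hj.2⟩, ?_⟩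
            rw [show p - i + j = p + (j - i : ℕ) by rw [Nat.cast_sub (by omega)]; ring]
            exact hpk _ (mem_Icc.2 ⟨by omega, by omega⟩)
    _ = ∑ s ∈ (range m).image (fun i : ℕ => p - i), #(exitSteps T k s) := by
        rw [sum_image hinj]
    _ ≤ ∑ s ∈ T, #(exitSteps T k s) := sum_le_sum_of_subset fun s hs => by
        obtain ⟨i, hi, rfl⟩ := mem_image.1 hs
        exact hpT i (mem_range.1 hi)

theorem two_mul_le_sum_card_exitSteps_of_run_of_gap {p q : Fin n} (hk : 3 ≤ k) (hkn : k < n)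
    (hp : p ∈ T) (hpk : ∀ j ∈ Icc 1 k, p + j ∉ T) (hq : q ∉ T) (hqk : ∀ j ∈ Icc 1 k, q - j ∈ T) :
    2 * k ≤ ∑ s ∈ T, #(exitSteps T k s) := by
  by_cases hqp : q = p + 1
  · have hpT : ∀ i : ℕ, i < 3 → p - (i : Fin n) ∈ T := fun i hi => by
      simpa [hqp] using hqk (i + 1) (mem_Icc.2 ⟨by omega, by omega⟩)
    have := sum_range_sub_le_sum_card_exitSteps (by omega) hpT hpk
    simp only [sum_range_succ, sum_range_zero] at this
    omega
  · have hinj : Set.InjOn (fun j : ℕ => q - j) (Icc 1 k) := fun i hi j hj h =>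
      natCast_injOn_Iio (by simp at hi ⊢; omega) (by simp at hj ⊢; omega) (sub_right_injective h)
    have hS : (Icc 1 k).image (fun j : ℕ => q - j) ⊆ T.erase p := fun s hs => by
      obtain ⟨j, hj, rfl⟩ := mem_image.1 hs
      refine mem_erase.2 ⟨fun hjp => ?_, hqk j hj⟩
      have hj' := mem_Icc.1 hj
      rcases hj'.1.eq_or_lt with rfl | hj1
      · exact hqp (by rw [← hjp]; simp)
      · refine hpk (j - 1) (mem_Icc.2 ⟨by omega, by omega⟩) ?_
        rw [← hjp, Nat.cast_sub hj'.1]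
        simpa using hqk 1 (mem_Icc.2 ⟨le_rfl, by omega⟩)
    have := add_card_le_sum_card_exitSteps hp hpk hS fun s hs => by
      obtain ⟨j, hj, rfl⟩ := mem_image.1 hs
      exact ⟨j, hj, by simpa using hq⟩
    rw [card_image_of_injOn hinj, Nat.card_Icc] at this
    omega

theorem two_mul_le_sum_card_exitSteps (hk : 3 ≤ k) (hT : k + 2 ≤ #T) (hTc : 2 * k ≤ #Tᶜ) :
    2 * k ≤ ∑ s ∈ T, #(exitSteps T k s) := by
  have hkn : k < n := by
    have := card_add_card_compl T
    rw [Fintype.card_fin] at this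
    omega
  by_cases hgap : ∀ x ∉ T, ∃ j ∈ Icc 1 k, x - j ∈ T
  · exact hTc.trans (card_compl_le_sum_card_exitSteps hgap)
  push Not at hgap
  obtain ⟨x, hx, hxk⟩ := hgap
  obtain ⟨p, hp, hpk⟩ := exists_forall_add_not_of_forall_sub_not hx hxk
    (card_pos.1 (by omega))
  by_cases hrun : ∀ s ∈ T, ∃ j ∈ Icc 1 k, s + j ∉ T
  · have := add_card_le_sum_card_exitSteps hp hpk subset_rfl fun s hs =>
      hrun s (mem_of_mem_erase hs)
    rw [card_erase_of_mem hp] at this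
    omega
  push Not at hrun
  obtain ⟨s, hs, hsk⟩ := hrun
  -- the end of a run of `T` is the start of a gap of `-Tᶜ`
  obtain ⟨q', hq', hqk'⟩ := exists_forall_add_not_of_forall_sub_not (P := fun z => -z ∉ T)
    (x := -s) (by simpa using hs) (fun j hj => by simpa [add_comm] using hsk j hj)
    (by obtain ⟨y, hy⟩ := card_pos.1 (show 0 < #Tᶜ by omega); exact ⟨-y, by simpa using hy⟩)
  refine two_mul_le_sum_card_exitSteps_of_run_of_gap hk hkn hp hpk hq' fun j hj => ?_
  simpa [neg_add_eq_sub] using hqk' j hj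

theorem ncard_edgeSet_add_sum_card_exitSteps_le (H : (graphPow (cycleGraph n) k).Subgraph)
    (hT : H.verts ⊆ T) : H.edgeSet.ncard + ∑ s ∈ T, #(exitSteps T k s) ≤ #T * k := by
  set F : Finset (Σ _ : Fin n, ℕ) := T.sigma fun s => {j ∈ Icc 1 k | s + j ∈ T}
  have hsub : H.edgeSet ⊆ ↑(F.image fun x => s(x.1, x.1 + (x.2 : Fin n))) := by
    rintro ⟨u, v⟩ huv
    have huv : H.Adj u v := huv
    have hu : u ∈ T := hT huv.fst_mem
    have hv : v ∈ T := hT huv.snd_mem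
    obtain ⟨j, hj, rfl | rfl⟩ := graphPow_cycleGraph_adj huv.adj_sub
    · exact mem_coe.2 (mem_image.2 ⟨⟨u, j⟩, by simp [F, hj, hu, hv], rfl⟩)
    · exact mem_coe.2 (mem_image.2 ⟨⟨v, j⟩, by simp [F, hj, hu, hv], Sym2.eq_swap⟩)
  calc H.edgeSet.ncard + ∑ s ∈ T, #(exitSteps T k s)
      ≤ #F + ∑ s ∈ T, #(exitSteps T k s) := by
        gcongr
        calc H.edgeSet.ncard ≤ (↑(F.image fun x => s(x.1, x.1 + (x.2 : Fin n))) : Set _).ncard :=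
              Set.ncard_le_ncard hsub (finite_toSet _)
          _ ≤ #F := by rw [Set.ncard_coe_finset]; exact card_image_le
    _ = #T * k := by
        rw [card_sigma, ← sum_add_distrib]
        simp only [exitSteps, card_filter_add_card_filter_not, Nat.card_Icc, Nat.add_sub_cancel,
          sum_const, smul_eq_mul]

theorem choose_two_le_mul_sub_two {v : ℕ} (hk : 3 ≤ k) (hv : 3 ≤ v) (hvk : v ≤ k + 1) :
    v.choose 2 ≤ k * (v - 2) := by
  obtain ⟨w, rfl⟩ : ∃ w, v = w + 3 := ⟨v - 3, by omega⟩
  rw [Nat.choose_two_right, show w + 3 - 1 = w + 2 by omega, show w + 3 - 2 = w + 1 by omega]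
  exact Nat.div_le_of_le_mul (by nlinarith)

theorem ncard_edgeSet_mul_le (hk : 3 ≤ k) (hn : 4 * k ≤ n)
    (H : (graphPow (cycleGraph n) k).Subgraph) (hT : H.verts = T) (h3 : 3 ≤ #T) :
    H.edgeSet.ncard * n ≤ (#T - 2) * (k * n + (k + 1) * k ^ 2) := by
  have hcount := ncard_edgeSet_add_sum_card_exitSteps_le H hT.le
  obtain ⟨w, hw⟩ : ∃ w, #T = w + 2 := ⟨#T - 2, by omega⟩
  rw [hw, Nat.add_sub_cancel]
  rw [hw] at hcount
  rcases le_or_gt (#T + 2 * k) n with hsparse | hdense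
  · suffices H.edgeSet.ncard ≤ k * w by nlinarith
    rcases le_or_gt #T (k + 1) with hsmall | hlarge
    · calc H.edgeSet.ncard ≤ (#T).choose 2 := by
            simpa [hT] using H.ncard_edgeSet_le_choose_two
        _ ≤ k * w := by simpa [hw] using choose_two_le_mul_sub_two hk h3 hsmall
    · have := two_mul_le_sum_card_exitSteps hk hlarge
        (by rw [card_compl, Fintype.card_fin]; omega)
      nlinarith
  · have he : H.edgeSet.ncard ≤ (w + 2) * k := (Nat.le_add_right _ _).trans hcount
    have hnw : n ≤ 2 * w + 2 := by omega
    have hk12 : 12 ≤ (k + 1) * k := by nlinarith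
    calc H.edgeSet.ncard * n ≤ (w + 2) * k * n := Nat.mul_le_mul_right _ he
      _ = w * (k * n) + 2 * k * n := by ring
      _ ≤ w * (k * n) + w * ((k + 1) * k ^ 2) := by
          have := Nat.mul_le_mul_left (2 * k) hnw
          have := Nat.mul_le_mul_left (w * k) hk12
          nlinarith
      _ = w * (k * n + (k + 1) * k ^ 2) := by ring

end CyclePower
end RandomGraphs

/-- Suppose that `n ≥ 4k` and `k ≥ 3`.  Then
`d₂^max (C_n^k) ≤ k + (k+1)k²/n`, i.e. every subgraph `H` of `C_n^k` with at least 3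
vertices satisfies `e_H/(v_H - 2) ≤ k + (k+1)k²/n`. -/
theorem two_density_cycle_power (k n : ℕ) (hk : 3 ≤ k) (hn : 4 * k ≤ n) :
    ∀ H : (graphPow (SimpleGraph.cycleGraph n) k).Subgraph, 3 ≤ H.verts.ncard →
      (H.edgeSet.ncard : ℝ) / ((H.verts.ncard : ℝ) - 2)
        ≤ (k : ℝ) + ((k : ℝ) + 1) * (k : ℝ) ^ 2 / (n : ℝ) := by
  intro H hv
  have : NeZero n := ⟨by omega⟩
  obtain ⟨T, hT⟩ : ∃ T : Finset (Fin n), H.verts = ↑T := ⟨_, (Set.toFinite _).coe_toFinset.symm⟩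
  rw [hT, Set.ncard_coe_finset] at hv ⊢
  have hv2 : (2 : ℝ) < #T := by exact_mod_cast hv
  have hn0 : (0 : ℝ) < n := by exact_mod_cast (show 0 < n by omega)
  have hcount : (H.edgeSet.ncard : ℝ) * n ≤ (#T - 2) * (k * n + (k + 1) * k ^ 2) := by
    have := ncard_edgeSet_mul_le hk hn H hT hv
    rw [← Nat.cast_le (α := ℝ)] at this
    push_cast [Nat.cast_sub (show 2 ≤ #T by omega)] at this
    exact this
  rw [div_le_iff₀ (by linarith)]
  calc (H.edgeSet.ncard : ℝ) = H.edgeSet.ncard * n / n := by field_simp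
    _ ≤ (#T - 2) * (k * n + (k + 1) * k ^ 2) / n := by gcongr
    _ = (k + (k + 1) * k ^ 2 / n) * (#T - 2) := by field_simp
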